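/- (Theorem 2, SNR lower bound.) Let g₁, …, g_T : Ω → ℝ^d be random vectors on a probability space with E‖gᵢ‖² < ∞, let U be a subspace of ℝ^d with orthogonal projections P onto U and P⊥ onto U⊥, and let K ⊆ {1, …, T}. Assume: (i) Bounded Noise Correlation with constant ρ ≥ 0: |E⟨P⊥ gᵢ, P⊥ gⱼ⟩| ≤ ρ √(E‖P⊥ gᵢ‖²) √(E‖P⊥ gⱼ‖²) for all i ≠ j; (ii) there is a vector μ ∈ U with ‖μ‖² ≥ σ² > 0 such that E[P gᵢ] = μ for all i ∈ K and E[P gᵢ] = 0 for all i ∉ K; (iii) the weights are indicators ωᵢ ∈ {0, 1} with ∑_{i ∈ K} ωᵢ ≥ c > 0. Then the estimator ĝ = ∑_{i=1}^T ωᵢ gᵢ satisfies E‖P ĝ‖² / E‖P⊥ ĝ‖² ≥ c² σ² / ((1 + ρ(T − 1)) ∑_{i ∉ K} ωᵢ² E‖P⊥ gᵢ‖² + δ), where δ = (1 + ρ(T − 1)) ∑_{i ∈ K} ωᵢ² E‖P⊥ gᵢ‖², provided E‖P⊥ ĝ‖² > 0. -/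

import Mathlib

open MeasureTheory Finset
open scoped RealInnerProductSpace BigOperators

/-!
Expanding the square, `E‖P⊥ ĝ‖²` is the quadratic form of the noise Gram matrix
`Gᵢⱼ = E⟪P⊥ gᵢ, P⊥ gⱼ⟫` at the weights. With `aᵢ = |ωᵢ| √Gᵢᵢ`, bounded noise correlation gives
`ωᵢ ωⱼ Gᵢⱼ ≤ ρ aᵢ aⱼ` off the diagonal, and Cauchy–Schwarz `(∑ aᵢ)² ≤ T ∑ aᵢ²` turns the form into
at most `(1 + ρ (T - 1)) ∑ ωᵢ² Gᵢᵢ`. For the signal, Jensen gives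
`E‖P ĝ‖² ≥ ‖E[P ĝ]‖² = (∑_{i ∈ K} ωᵢ)² ‖μ‖² ≥ c² σ²`.
-/

/-- The orthogonal projection onto a subspace `W` of `ℝ^d`, viewed as a map `ℝ^d → ℝ^d`. -/
noncomputable def Pproj {d : ℕ} (W : Submodule ℝ (EuclideanSpace ℝ (Fin d))) :
    EuclideanSpace ℝ (Fin d) →L[ℝ] EuclideanSpace ℝ (Fin d) :=
  W.subtypeL.comp W.orthogonalProjectionOnto

lemma sum_sum_mul_mul_le_of_abs_le_mul_sqrt {ι : Type*} [Fintype ι] (G : ι → ι → ℝ)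
    (s w : ι → ℝ) {ρ : ℝ} (hρ : 0 ≤ ρ) (hs : ∀ i, 0 ≤ s i) (hdiag : ∀ i, G i i = s i)
    (hoff : ∀ i j, i ≠ j → |G i j| ≤ ρ * Real.sqrt (s i) * Real.sqrt (s j)) :
    ∑ i, ∑ j, w i * w j * G i j ≤ (1 + ρ * (Fintype.card ι - 1)) * ∑ i, w i ^ 2 * s i := by
  classical
  set a : ι → ℝ := fun i => |w i| * Real.sqrt (s i)
  have ha : ∀ i, a i ^ 2 = w i ^ 2 * s i := fun i => by
    rw [mul_pow, sq_abs, Real.sq_sqrt (hs i)]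
  have hterm : ∀ i j,
      w i * w j * G i j ≤ ρ * (a i * a j) + if i = j then (1 - ρ) * a i ^ 2 else 0 := by
    intro i j
    split_ifs with hij
    · subst hij
      exact le_of_eq (by rw [hdiag]; linear_combination (-1 : ℝ) * ha i)
    · calc w i * w j * G i j ≤ |w i * w j| * |G i j| := by
            rw [← abs_mul]; exact le_abs_self _
        _ ≤ |w i * w j| * (ρ * Real.sqrt (s i) * Real.sqrt (s j)) := by
            gcongr; exact hoff i j hij
        _ = ρ * (a i * a j) + 0 := by simp only [a, abs_mul]; ring
  have hcs : (∑ i, a i) ^ 2 ≤ Fintype.card ι * ∑ i, a i ^ 2 := by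
    simpa using sq_sum_le_card_mul_sum_sq (s := univ) (f := a)
  calc ∑ i, ∑ j, w i * w j * G i j
      ≤ ∑ i, ∑ j, (ρ * (a i * a j) + if i = j then (1 - ρ) * a i ^ 2 else 0) := by
        gcongr with i _ j _; exact hterm i j
    _ = ρ * (∑ i, a i) ^ 2 + (1 - ρ) * ∑ i, a i ^ 2 := by
        simp only [sum_add_distrib, sum_ite_eq, mem_univ, if_true, ← mul_sum, sq, sum_mul_sum]
    _ ≤ (1 + ρ * (Fintype.card ι - 1)) * ∑ i, w i ^ 2 * s i := by
        simp only [ha] at hcs ⊢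
        nlinarith

section
variable {Ω E ι : Type*} [MeasurableSpace Ω] {μ : Measure Ω}
  [NormedAddCommGroup E] [InnerProductSpace ℝ E]

theorem MeasureTheory.MemLp.integrable_inner {f g : Ω → E} (hf : MemLp f 2 μ)
    (hg : MemLp g 2 μ) : Integrable (fun x => ⟪f x, g x⟫) μ :=
  (hf.norm.integrable_mul hg.norm).mono' (hf.1.inner hg.1)
    (ae_of_all _ fun x => by simpa using abs_real_inner_le_norm (f x) (g x))

theorem sq_norm_integral_le_integral_sq_norm [IsProbabilityMeasure μ] {f : Ω → E}
    (hf : MemLp f 2 μ) : ‖∫ x, f x ∂μ‖ ^ 2 ≤ ∫ x, ‖f x‖ ^ 2 ∂μ := by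
  have hvar : 0 ≤ (∫ x, ‖f x‖ ^ 2 ∂μ) - (∫ x, ‖f x‖ ∂μ) ^ 2 := by
    simpa [ProbabilityTheory.variance_eq_sub hf.norm] using
      ProbabilityTheory.variance_nonneg (fun x => ‖f x‖) μ
  calc ‖∫ x, f x ∂μ‖ ^ 2 ≤ (∫ x, ‖f x‖ ∂μ) ^ 2 := by
        gcongr; exact norm_integral_le_integral_norm f
    _ ≤ ∫ x, ‖f x‖ ^ 2 ∂μ := sub_nonneg.1 hvar

variable [Fintype ι]

theorem integral_norm_sq_sum_smul {f : ι → Ω → E} (hf : ∀ i, MemLp (f i) 2 μ) (w : ι → ℝ) :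
    ∫ x, ‖∑ i, w i • f i x‖ ^ 2 ∂μ = ∑ i, ∑ j, w i * w j * ∫ x, ⟪f i x, f j x⟫ ∂μ := by
  have hint : ∀ i j, Integrable (fun x => w i * w j * ⟪f i x, f j x⟫) μ := fun i j =>
    ((hf i).integrable_inner (hf j)).const_mul _
  simp_rw [← real_inner_self_eq_norm_sq, sum_inner, inner_sum, real_inner_smul_left,
    real_inner_smul_right, ← mul_assoc]
  rw [integral_finsetSum _ fun i _ => integrable_finsetSum _ fun j _ => hint i j]
  simp_rw [integral_finsetSum _ fun j _ => hint _ j, integral_const_mul]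

theorem integral_norm_sq_sum_smul_le {f : ι → Ω → E} (hf : ∀ i, MemLp (f i) 2 μ) (w : ι → ℝ)
    {ρ : ℝ} (hρ : 0 ≤ ρ)
    (hcorr : ∀ i j, i ≠ j → |∫ x, ⟪f i x, f j x⟫ ∂μ|
      ≤ ρ * Real.sqrt (∫ x, ‖f i x‖ ^ 2 ∂μ) * Real.sqrt (∫ x, ‖f j x‖ ^ 2 ∂μ)) :
    ∫ x, ‖∑ i, w i • f i x‖ ^ 2 ∂μ
      ≤ (1 + ρ * (Fintype.card ι - 1)) * ∑ i, w i ^ 2 * ∫ x, ‖f i x‖ ^ 2 ∂μ := by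
  rw [integral_norm_sq_sum_smul hf]
  refine sum_sum_mul_mul_le_of_abs_le_mul_sqrt _ _ w hρ
    (fun i => integral_nonneg fun x => sq_nonneg _) (fun i => ?_) hcorr
  simp_rw [real_inner_self_eq_norm_sq]

theorem norm_sq_sum_smul_integral_le [IsProbabilityMeasure μ] {f : ι → Ω → E}
    (hf : ∀ i, MemLp (f i) 2 μ) (w : ι → ℝ) :
    ‖∑ i, w i • ∫ x, f i x ∂μ‖ ^ 2 ≤ ∫ x, ‖∑ i, w i • f i x‖ ^ 2 ∂μ := by
  simp_rw [← integral_smul]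
  rw [← integral_finsetSum (f := fun i x => w i • f i x) _
    fun i _ => ((hf i).integrable one_le_two).smul (w i)]
  exact sq_norm_integral_le_integral_sq_norm <|
    memLp_finsetSum _ fun i _ => (hf i).const_smul (w i)

end

theorem stmt10_general {Ω : Type*} [MeasurableSpace Ω] (μ : Measure Ω) [IsProbabilityMeasure μ]
    {d T : ℕ} (g : Fin T → Ω → EuclideanSpace ℝ (Fin d))
    (hmeas : ∀ i, Measurable (g i))
    (hL2 : ∀ i, Integrable (fun x => ‖g i x‖ ^ 2) μ)
    (U : Submodule ℝ (EuclideanSpace ℝ (Fin d)))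
    (K : Finset (Fin T))
    (ρ : ℝ) (hρ : 0 ≤ ρ)
    (hBNC : ∀ i j, i ≠ j →
      |∫ x, ⟪Pproj Uᗮ (g i x), Pproj Uᗮ (g j x)⟫ ∂μ|
        ≤ ρ * Real.sqrt (∫ x, ‖Pproj Uᗮ (g i x)‖ ^ 2 ∂μ)
            * Real.sqrt (∫ x, ‖Pproj Uᗮ (g j x)‖ ^ 2 ∂μ))
    (μvec : EuclideanSpace ℝ (Fin d))
    (σ : ℝ) (hμσ : σ ^ 2 ≤ ‖μvec‖ ^ 2)
    (hmeanK : ∀ i ∈ K, (∫ x, Pproj U (g i x) ∂μ) = μvec)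
    (hmean0 : ∀ i ∉ K, (∫ x, Pproj U (g i x) ∂μ) = 0)
    (ω : Fin T → ℝ)
    (c : ℝ) (hc : 0 < c) (hcsum : c ≤ ∑ i ∈ K, ω i)
    (hnoise : 0 < ∫ x, ‖Pproj Uᗮ (∑ i, ω i • g i x)‖ ^ 2 ∂μ) :
    c ^ 2 * σ ^ 2 /
        ((1 + ρ * ((T : ℝ) - 1)) * (∑ i ∈ Kᶜ, ω i ^ 2 * ∫ x, ‖Pproj Uᗮ (g i x)‖ ^ 2 ∂μ)
          + (1 + ρ * ((T : ℝ) - 1)) * (∑ i ∈ K, ω i ^ 2 * ∫ x, ‖Pproj Uᗮ (g i x)‖ ^ 2 ∂μ))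
      ≤ (∫ x, ‖Pproj U (∑ i, ω i • g i x)‖ ^ 2 ∂μ)
          / ∫ x, ‖Pproj Uᗮ (∑ i, ω i • g i x)‖ ^ 2 ∂μ := by
  have hPg : ∀ W i, MemLp (fun x => Pproj W (g i x)) 2 μ := fun W i =>
    (Pproj W).comp_memLp' <|
      (memLp_two_iff_integrable_sq_norm (hmeas i).aestronglyMeasurable).2 (hL2 i)
  have hPsum : ∀ W x, Pproj W (∑ i, ω i • g i x) = ∑ i, ω i • Pproj W (g i x) := by
    simp [map_sum]
  have hmean : ∑ i, ω i • ∫ x, Pproj U (g i x) ∂μ = (∑ i ∈ K, ω i) • μvec := by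
    rw [sum_smul, ← sum_subset (subset_univ K) fun i _ hi => by rw [hmean0 i hi, smul_zero]]
    exact sum_congr rfl fun i hi => by rw [hmeanK i hi]
  simp only [hPsum] at hnoise ⊢
  have hsignal : c ^ 2 * σ ^ 2 ≤ ∫ x, ‖∑ i, ω i • Pproj U (g i x)‖ ^ 2 ∂μ := calc
    c ^ 2 * σ ^ 2 ≤ (∑ i ∈ K, ω i) ^ 2 * ‖μvec‖ ^ 2 := by gcongr
    _ = ‖∑ i, ω i • ∫ x, Pproj U (g i x) ∂μ‖ ^ 2 := by
      rw [hmean, norm_smul, mul_pow, Real.norm_eq_abs, sq_abs]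
    _ ≤ _ := norm_sq_sum_smul_integral_le (hPg U) ω
  have hnoise_le := integral_norm_sq_sum_smul_le (hPg Uᗮ) ω hρ hBNC
  rw [← mul_add, sum_compl_add_sum]
  exact div_le_div₀ (integral_nonneg fun _ => sq_nonneg _) hsignal hnoise
    (by simpa using hnoise_le)

/-- Theorem 2, SNR lower bound: under Bounded Noise Correlation, a common
signal mean `μvec ∈ U` with `‖μvec‖² ≥ σ² > 0` on the knowledge-critical tokens `K`, and
indicator weights with `∑_{i ∈ K} ωᵢ ≥ c > 0`, the estimator `ĝ = ∑ᵢ ωᵢ gᵢ` satisfies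
`E‖P ĝ‖² / E‖P⊥ ĝ‖² ≥ c² σ² / ((1 + ρ(T − 1)) ∑_{i ∉ K} ωᵢ² E‖P⊥ gᵢ‖² + δ)`
with `δ = (1 + ρ(T − 1)) ∑_{i ∈ K} ωᵢ² E‖P⊥ gᵢ‖²`, provided `E‖P⊥ ĝ‖² > 0`. -/
theorem stmt10 {Ω : Type*} [MeasurableSpace Ω] (μ : Measure Ω) [IsProbabilityMeasure μ]
    {d T : ℕ} (g : Fin T → Ω → EuclideanSpace ℝ (Fin d))
    (hmeas : ∀ i, Measurable (g i))
    (hL2 : ∀ i, Integrable (fun x => ‖g i x‖ ^ 2) μ)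
    (U : Submodule ℝ (EuclideanSpace ℝ (Fin d)))
    (K : Finset (Fin T))
    (ρ : ℝ) (hρ : 0 ≤ ρ)
    (hBNC : ∀ i j, i ≠ j →
      |∫ x, ⟪Pproj Uᗮ (g i x), Pproj Uᗮ (g j x)⟫ ∂μ|
        ≤ ρ * Real.sqrt (∫ x, ‖Pproj Uᗮ (g i x)‖ ^ 2 ∂μ)
            * Real.sqrt (∫ x, ‖Pproj Uᗮ (g j x)‖ ^ 2 ∂μ))
    (μvec : EuclideanSpace ℝ (Fin d)) (hμU : μvec ∈ U)
    (σ : ℝ) (hσpos : 0 < σ ^ 2) (hμσ : σ ^ 2 ≤ ‖μvec‖ ^ 2)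
    (hmeanK : ∀ i ∈ K, (∫ x, Pproj U (g i x) ∂μ) = μvec)
    (hmean0 : ∀ i ∉ K, (∫ x, Pproj U (g i x) ∂μ) = 0)
    (ω : Fin T → ℝ) (hω : ∀ i, ω i = 0 ∨ ω i = 1)
    (c : ℝ) (hc : 0 < c) (hcsum : c ≤ ∑ i ∈ K, ω i)
    (hnoise : 0 < ∫ x, ‖Pproj Uᗮ (∑ i, ω i • g i x)‖ ^ 2 ∂μ) :
    c ^ 2 * σ ^ 2 /
        ((1 + ρ * ((T : ℝ) - 1)) * (∑ i ∈ Kᶜ, ω i ^ 2 * ∫ x, ‖Pproj Uᗮ (g i x)‖ ^ 2 ∂μ)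
          + (1 + ρ * ((T : ℝ) - 1)) * (∑ i ∈ K, ω i ^ 2 * ∫ x, ‖Pproj Uᗮ (g i x)‖ ^ 2 ∂μ))
      ≤ (∫ x, ‖Pproj U (∑ i, ω i • g i x)‖ ^ 2 ∂μ)
          / ∫ x, ‖Pproj Uᗮ (∑ i, ω i • g i x)‖ ^ 2 ∂μ :=
  stmt10_general μ g hmeas hL2 U K ρ hρ hBNC μvec σ hμσ hmeanK hmean0 ω c hc hcsum hnoise
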